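/- Let A be an m×n real matrix, b ∈ ℝ^m, v : ℕ → ℝ^m, w z : ℕ → ℝ^n. Let H : ℕ → (n×n real matrices) and x : ℕ → ℝ^n satisfy, for every k with 1 ≤ k ≤ i: p k = (H k)ᵀ *ᵥ (z k), δ k = w k ⬝ᵥ (H k *ᵥ (Aᵀ *ᵥ v k)) ≠ 0, z k ⬝ᵥ (H k *ᵥ (Aᵀ *ᵥ v k)) ≠ 0, H (k+1) = H k - (1/δ k) • vecMulVec (H k *ᵥ (Aᵀ *ᵥ v k)) ((H k)ᵀ *ᵥ w k), and x (k+1) = x k - ((v k ⬝ᵥ (A *ᵥ x k - b)) / (v k ⬝ᵥ (A *ᵥ p k))) • p k. Then for every j with 1 ≤ j ≤ i, (v j) ⬝ᵥ (A *ᵥ x (i+1) - b) = 0, i.e. x (i+1) solves the scaled system Vᵢᵀ A x = Vᵢᵀ b. -/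

import Mathlib

/-!
The update `H ↦ H - (1/δ) • (H u)(Hᵀ w)ᵀ` kills `u` and keeps every vector already killed by `H`
in the kernel, so `H k` annihilates `Aᵀ v j` for all `j < k`. Hence the search direction
`p k = (H k)ᵀ z k` satisfies `v j ⬝ᵥ A p k = z k ⬝ᵥ H k Aᵀ v j = 0` for `j < k`: the step along
`p k`, which zeroes the `k`-th scaled residual, leaves all earlier scaled residuals unchanged.
-/

open Matrix

variable {K ι κ : Type*} [Field K] [Fintype ι] [Fintype κ]

def absUpdate (H : Matrix ι ι K) (u w : ι → K) : Matrix ι ι K :=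
  H - (1 / (w ⬝ᵥ (H *ᵥ u))) • vecMulVec (H *ᵥ u) (Hᵀ *ᵥ w)

def lineSearchStep (A : Matrix κ ι K) (b v : κ → K) (p x : ι → K) : ι → K :=
  x - ((v ⬝ᵥ (A *ᵥ x - b)) / (v ⬝ᵥ (A *ᵥ p))) • p

theorem absUpdate_mulVec (H : Matrix ι ι K) (u w y : ι → K) :
    absUpdate H u w *ᵥ y = H *ᵥ y - ((w ⬝ᵥ (H *ᵥ y)) / (w ⬝ᵥ (H *ᵥ u))) • (H *ᵥ u) := by
  rw [absUpdate, sub_mulVec, smul_mulVec, vecMulVec_mulVec, op_smul_eq_smul,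
    mulVec_transpose, ← dotProduct_mulVec, smul_smul, one_div_mul_eq_div]

theorem absUpdate_mulVec_self {H : Matrix ι ι K} {u w : ι → K} (hδ : w ⬝ᵥ (H *ᵥ u) ≠ 0) :
    absUpdate H u w *ᵥ u = 0 := by
  rw [absUpdate_mulVec, div_self hδ, one_smul, sub_self]

theorem absUpdate_mulVec_eq_zero {H : Matrix ι ι K} {y : ι → K} (u w : ι → K)
    (hy : H *ᵥ y = 0) : absUpdate H u w *ᵥ y = 0 := by
  rw [absUpdate_mulVec, hy, dotProduct_zero, zero_div, zero_smul, sub_zero]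

theorem dotProduct_mulVec_transpose_mulVec (A : Matrix κ ι K) (H : Matrix ι ι K)
    (v : κ → K) (z : ι → K) : v ⬝ᵥ (A *ᵥ (Hᵀ *ᵥ z)) = z ⬝ᵥ (H *ᵥ (Aᵀ *ᵥ v)) := by
  rw [mulVec_transpose, mulVec_transpose, dotProduct_mulVec, dotProduct_mulVec, dotProduct_comm]

theorem lineSearchStep_residual_self (A : Matrix κ ι K) (b v : κ → K) {p : ι → K} (x : ι → K)
    (hp : v ⬝ᵥ (A *ᵥ p) ≠ 0) : v ⬝ᵥ (A *ᵥ lineSearchStep A b v p x - b) = 0 := by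
  rw [lineSearchStep, mulVec_sub, mulVec_smul, sub_right_comm, dotProduct_sub, dotProduct_smul,
    smul_eq_mul, div_mul_cancel₀ _ hp, sub_self]

theorem lineSearchStep_residual_of_dotProduct_eq_zero (A : Matrix κ ι K) (b v : κ → K)
    {v' : κ → K} {p : ι → K} (x : ι → K) (hp : v' ⬝ᵥ (A *ᵥ p) = 0) :
    v' ⬝ᵥ (A *ᵥ lineSearchStep A b v p x - b) = v' ⬝ᵥ (A *ᵥ x - b) := by
  rw [lineSearchStep, mulVec_sub, mulVec_smul, sub_right_comm, dotProduct_sub, dotProduct_smul,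
    smul_eq_mul, hp, mul_zero, sub_zero]

theorem absUpdate_iterate_mulVec_eq_zero {H : ℕ → Matrix ι ι K} {u w : ℕ → ι → K} {j l : ℕ}
    (hjl : j < l) (hstep : ∀ k, j ≤ k → k < l → H (k + 1) = absUpdate (H k) (u k) (w k))
    (hδ : w j ⬝ᵥ (H j *ᵥ u j) ≠ 0) : H l *ᵥ u j = 0 := by
  induction l, hjl using Nat.le_induction with
  | base => rw [hstep j le_rfl j.lt_succ_self, absUpdate_mulVec_self hδ]
  | succ l hjl ih =>
    rw [hstep l (Nat.le_of_succ_le hjl) l.lt_succ_self,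
      absUpdate_mulVec_eq_zero _ _ (ih fun k hjk hkl => hstep k hjk (hkl.trans l.lt_succ_self))]

theorem lineSearchStep_iterate_residual_eq_zero (A : Matrix κ ι K) (b : κ → K)
    {v : ℕ → κ → K} {p x : ℕ → ι → K} {j l : ℕ} (hjl : j < l)
    (hstep : ∀ k, j ≤ k → k < l → x (k + 1) = lineSearchStep A b (v k) (p k) (x k))
    (hp : v j ⬝ᵥ (A *ᵥ p j) ≠ 0) (horth : ∀ k, j < k → k < l → v j ⬝ᵥ (A *ᵥ p k) = 0) :
    v j ⬝ᵥ (A *ᵥ x l - b) = 0 := by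
  induction l, hjl using Nat.le_induction with
  | base => rw [hstep j le_rfl j.lt_succ_self, lineSearchStep_residual_self A b _ _ hp]
  | succ l hjl ih =>
    rw [hstep l (Nat.le_of_succ_le hjl) l.lt_succ_self,
      lineSearchStep_residual_of_dotProduct_eq_zero A b _ _ (horth l hjl l.lt_succ_self)]
    exact ih (fun k hjk hkl => hstep k hjk (hkl.trans l.lt_succ_self))
      (fun k hjk hkl => horth k hjk (hkl.trans l.lt_succ_self))

theorem abs_iterate_solves_scaled_system {m n : ℕ} (i : ℕ)
    (A : Matrix (Fin m) (Fin n) ℝ) (b : Fin m → ℝ)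
    (v : ℕ → Fin m → ℝ) (w z : ℕ → Fin n → ℝ)
    (H : ℕ → Matrix (Fin n) (Fin n) ℝ)
    (p : ℕ → Fin n → ℝ) (x : ℕ → Fin n → ℝ)
    (hrec : ∀ k, 1 ≤ k → k ≤ i →
      p k = (H k)ᵀ *ᵥ z k ∧
      w k ⬝ᵥ (H k *ᵥ (Aᵀ *ᵥ v k)) ≠ 0 ∧
      z k ⬝ᵥ (H k *ᵥ (Aᵀ *ᵥ v k)) ≠ 0 ∧
      H (k + 1) = H k - (1 / (w k ⬝ᵥ (H k *ᵥ (Aᵀ *ᵥ v k)))) •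
        vecMulVec (H k *ᵥ (Aᵀ *ᵥ v k)) ((H k)ᵀ *ᵥ w k) ∧
      x (k + 1) = x k -
        ((v k ⬝ᵥ (A *ᵥ x k - b)) / (v k ⬝ᵥ (A *ᵥ p k))) • p k) :
    ∀ j, 1 ≤ j → j ≤ i → v j ⬝ᵥ (A *ᵥ x (i + 1) - b) = 0 := by
  intro j hj hji
  have hAp (k : ℕ) (hk : 1 ≤ k) (hki : k ≤ i) :
      v j ⬝ᵥ (A *ᵥ p k) = z k ⬝ᵥ (H k *ᵥ (Aᵀ *ᵥ v j)) := by
    rw [(hrec k hk hki).1, dotProduct_mulVec_transpose_mulVec]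
  have hkernel (k : ℕ) (hjk : j < k) (hki : k ≤ i) : H k *ᵥ (Aᵀ *ᵥ v j) = 0 :=
    absUpdate_iterate_mulVec_eq_zero (u := fun k => Aᵀ *ᵥ v k) hjk
      (fun k' hjk' hk'k => (hrec k' (hj.trans hjk') (hk'k.le.trans hki)).2.2.2.1)
      (hrec j hj hji).2.1
  refine lineSearchStep_iterate_residual_eq_zero A b (Nat.lt_succ_of_le hji)
    (fun k hjk hki => (hrec k (hj.trans hjk) (Nat.le_of_lt_succ hki)).2.2.2.2) ?_ ?_
  · rw [hAp j hj hji]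
    exact (hrec j hj hji).2.2.1
  · intro k hjk hki
    rw [hAp k (hj.trans hjk.le) (Nat.le_of_lt_succ hki),
      hkernel k hjk (Nat.le_of_lt_succ hki), dotProduct_zero]
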